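/- arXiv:2506.16861 — 12 statements merged into one kernel-verified Lean document; each statement's English description precedes it below -/
import Mathlib

section
/- If trace(M * M) = 0, then the partial order ≤ on Fin n is a total order (the poset is a totally ordered set). -/
/-! `trace (M * M) = ∑ i j, M i j * M j i` is a sum of nonnegative terms, and the term
`M i j * M j i` equals `1` exactly when `i` and `j` are incomparable. -/

open scoped Classical

/-- The matrix associated with a partial order on `Fin n`:
`M i j = 0` if `i ≤ j` and `M i j = 1` otherwise. -/
noncomputable def assocMatrix {n : ℕ} (po : PartialOrder (Fin n)) :
    Matrix (Fin n) (Fin n) ℤ :=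
  Matrix.of fun i j => if po.le i j then 0 else 1

theorem Matrix.trace_mul_self_eq_zero_iff_of_nonneg {ι R : Type*} [Fintype ι] [Semiring R]
    [PartialOrder R] [IsOrderedRing R] {M : Matrix ι ι R} (hM : ∀ i j, 0 ≤ M i j) :
    (M * M).trace = 0 ↔ ∀ i j, M i j * M j i = 0 := by
  have hprod : ∀ i j, 0 ≤ M i j * M j i := fun i j => mul_nonneg (hM i j) (hM j i)
  simp only [Matrix.trace, Matrix.diag_apply, Matrix.mul_apply]
  rw [Finset.sum_eq_zero_iff_of_nonneg fun i _ => Finset.sum_nonneg fun j _ => hprod i j]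
  simp only [Finset.sum_eq_zero_iff_of_nonneg fun j _ => hprod _ j, Finset.mem_univ,
    forall_const]

theorem assocMatrix_apply {n : ℕ} (po : PartialOrder (Fin n)) (i j : Fin n) :
    assocMatrix po i j = if po.le i j then 0 else 1 :=
  rfl

theorem assocMatrix_nonneg {n : ℕ} (po : PartialOrder (Fin n)) (i j : Fin n) :
    0 ≤ assocMatrix po i j := by
  rw [assocMatrix_apply]
  split_ifs <;> simp

theorem assocMatrix_mul_assocMatrix_eq_zero_iff {n : ℕ} (po : PartialOrder (Fin n))
    (i j : Fin n) : assocMatrix po i j * assocMatrix po j i = 0 ↔ po.le i j ∨ po.le j i := by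
  rw [assocMatrix_apply, assocMatrix_apply]
  split_ifs <;> simp_all

/-- If the trace of `M * M` vanishes, the order is total. -/
theorem stmt6 {n : ℕ} (po : PartialOrder (Fin n))
    (h : Matrix.trace (assocMatrix po * assocMatrix po) = 0) :
    ∀ i j : Fin n, po.le i j ∨ po.le j i := fun i j =>
  (assocMatrix_mul_assocMatrix_eq_zero_iff po i j).mp <|
    (Matrix.trace_mul_self_eq_zero_iff_of_nonneg (assocMatrix_nonneg po)).mp h i j
end

section
/- Suppose the poset (Fin n, ≤) is disconnected, i.e., there exist a, b : Fin n that are not related by the reflexive-transitive closure of the comparability relation (fun x y => x ≤ y ∨ y ≤ x). Then the digraph G_X on Fin n with a directed edge from i to j whenever M i j = 1 is strongly connected: for all i, j : Fin n, Relation.ReflTransGen (fun a b => ¬(a ≤ b)) i j holds. -/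
open scoped Classical

/-!
If `i ≤ j` fails, `i → j` is already an edge. If `i ≤ j`, pick `c` outside the connected
component of `i` (and hence of `j`): then `c` is incomparable to both, so `i → c → j`.
-/

namespace Relation

variable {α : Type*} {r : α → α → Prop}

theorem exists_not_reflTransGen_symmGen (h : ∃ a b, ¬ ReflTransGen (SymmGen r) a b) (i : α) :
    ∃ c, ¬ ReflTransGen (SymmGen r) i c := by
  obtain ⟨a, b, hab⟩ := h
  by_contra! hi
  exact hab ((symm (hi a)).trans (hi b))

theorem reflTransGen_not_of_not_reflTransGen_symmGen
    (h : ∃ a b, ¬ ReflTransGen (SymmGen r) a b) (i j : α) :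
    ReflTransGen (fun a b => ¬ r a b) i j := by
  by_cases hij : r i j
  · obtain ⟨c, hic⟩ := exists_not_reflTransGen_symmGen h i
    have hi_c : ¬ r i c := fun hle => hic (.single (.of_rel hle))
    have hc_j : ¬ r c j := fun hle =>
      hic ((ReflTransGen.single (.of_rel hij)).tail (.of_rel_symm hle))
    exact (ReflTransGen.single hi_c).tail hc_j
  · exact .single hij

end Relation

/-- If the poset is disconnected, then the digraph with an edge `i → j`
whenever `M i j = 1`, i.e. `¬ i ≤ j`, is strongly connected. -/
theorem stmt7 {n : ℕ} (po : PartialOrder (Fin n))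
    (h : ∃ a b : Fin n,
      ¬ Relation.ReflTransGen (fun x y => po.le x y ∨ po.le y x) a b) :
    ∀ i j : Fin n, Relation.ReflTransGen (fun a b => ¬ po.le a b) i j :=
  Relation.reflTransGen_not_of_not_reflTransGen_symmGen h
end

section
/- A point i : Fin n is an up beat point if and only if there exists j : Fin n such that for all k, M i k − M j k equals −1 if k = i and 0 otherwise (rows satisfy rᵢ − rⱼ = −eᵢ). Dually, i is a down beat point if and only if there exists j such that for all k, M k i − M k j equals −1 if k = i and 0 otherwise (columns satisfy cᵢ − cⱼ = −eᵢ). -/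
open scoped Classical

/-!
`j` is the least element of `Ioi i` exactly when `Ici j = Ioi i`, i.e. `Ici j = Ici i \ {i}`.
Row `a` of the matrix is the indicator of the complement of `Ici a`, so this says precisely
`rᵢ - rⱼ = -eᵢ`. Down beat points are the order dual.
-/

open Set

variable {α : Type*}

theorem IsUpperSet.isLeast_iff_Ici_eq [Preorder α] {s : Set α} {a : α} (hs : IsUpperSet s) :
    IsLeast s a ↔ Ici a = s :=
  ⟨fun h => Set.ext fun _ => ⟨fun hk => hs hk h.1, fun hk => h.2 hk⟩, fun h => h ▸ isLeast_Ici⟩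

section PartialOrder

variable [PartialOrder α] [DecidableEq α] {i j k : α}

theorem ite_le_sub_ite_le_eq_iff :
    ((if i ≤ k then (0 : ℤ) else 1) - (if j ≤ k then 0 else 1) = if k = i then -1 else 0) ↔
      (j ≤ k ↔ i < k) := by
  by_cases hk : k = i
  · subst hk
    split_ifs <;> simp_all
  · have : i < k ↔ i ≤ k := lt_iff_le_and_ne.trans (and_iff_left (Ne.symm hk))
    split_ifs <;> simp_all

theorem isLeast_Ioi_iff_ite_le_sub_ite_le :
    IsLeast (Ioi i) j ↔
      ∀ k, (if i ≤ k then (0 : ℤ) else 1) - (if j ≤ k then 0 else 1) = if k = i then -1 else 0 := by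
  rw [(isUpperSet_Ioi (a := i)).isLeast_iff_Ici_eq, Set.ext_iff]
  exact forall_congr' fun k => ite_le_sub_ite_le_eq_iff.symm

theorem isGreatest_Iio_iff_ite_ge_sub_ite_ge :
    IsGreatest (Iio i) j ↔
      ∀ k, (if k ≤ i then (0 : ℤ) else 1) - (if k ≤ j then 0 else 1) = if k = i then -1 else 0 :=
  isLeast_Ioi_iff_ite_le_sub_ite_le (α := αᵒᵈ)

end PartialOrder

/-- Characterisation of up and down beat points via rows and columns of the
associated matrix. -/
theorem stmt8 {n : ℕ} (po : PartialOrder (Fin n)) (i : Fin n) :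
    ((∃ j, po.lt i j ∧ ∀ k, po.lt i k → po.le j k) ↔
        ∃ j, ∀ k, assocMatrix po i k - assocMatrix po j k =
          if k = i then -1 else 0) ∧
      ((∃ j, po.lt j i ∧ ∀ k, po.lt k i → po.le k j) ↔
        ∃ j, ∀ k, assocMatrix po k i - assocMatrix po k j =
          if k = i then -1 else 0) :=
  -- `Fin n` carries its own order, so `po` has to be supplied by hand.
  ⟨exists_congr fun _ => @isLeast_Ioi_iff_ite_le_sub_ite_le _ po _ i _,
    exists_congr fun _ => @isGreatest_Iio_iff_ite_ge_sub_ite_ge _ po _ i _⟩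
end

section
/- If i : Fin n is a beat point of the poset (Fin n, ≤), then det M = − det (M∖i), where M∖i is the matrix obtained from M by deleting row i and column i. -/
open scoped Classical

/-- `i` is a beat point: an up beat point (the set of points strictly above `i`
has a least element) or a down beat point (the set of points strictly below `i`
has a greatest element). -/
def IsBeatPoint {n : ℕ} (po : PartialOrder (Fin n)) (i : Fin n) : Prop :=
  (∃ j, po.lt i j ∧ ∀ k, po.lt i k → po.le j k) ∨
    (∃ j, po.lt j i ∧ ∀ k, po.lt k i → po.le k j)

/-!
If `j` is the least point strictly above `i`, then `i ≤ k ↔ j ≤ k` for every `k ≠ i`, so rows `i`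
and `j` of `M` differ only in column `i`, where `M i i - M j i = -1`. Subtracting row `j` from
row `i` thus leaves `-eᵢ` as row `i` without changing the determinant, and expanding along that
row gives `-det (M∖i)`. A down beat point is an up beat point of the dual order, whose matrix
is `Mᵀ`.
-/

open Matrix

namespace Matrix

variable {R : Type*} [CommRing R] {n : ℕ}

theorem det_eq_mul_det_submatrix_of_row_eq_single (A : Matrix (Fin (n + 1)) (Fin (n + 1)) R)
    {i : Fin (n + 1)} {c : R} (hrow : A i = Pi.single i c) :
    A.det = c * (A.submatrix i.succAbove i.succAbove).det := by
  rw [det_succ_row A i, Fintype.sum_eq_single i fun k hk => by simp [hrow, hk]]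
  simp [hrow, Even.neg_one_pow ⟨(i : ℕ), rfl⟩]

theorem det_eq_mul_det_submatrix_of_row_sub_eq_single (A : Matrix (Fin (n + 1)) (Fin (n + 1)) R)
    {i j : Fin (n + 1)} (hij : i ≠ j) {c : R} (hrow : A i - A j = Pi.single i c) :
    A.det = c * (A.submatrix i.succAbove i.succAbove).det := by
  have hrow' : updateRow A i (A i + (-1 : R) • A j) i = Pi.single i c := by
    rw [updateRow_self, ← hrow, neg_one_smul, sub_eq_add_neg]
  rw [← det_updateRow_add_smul_self A hij (-1), det_eq_mul_det_submatrix_of_row_eq_single _ hrow',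
    submatrix_updateRow_succAbove]

end Matrix

theorem le_iff_le_of_lt_of_forall_lt_imp_le {α : Type*} [PartialOrder α] {i j k : α}
    (hij : i < j) (hleast : ∀ k, i < k → j ≤ k) (hki : k ≠ i) : i ≤ k ↔ j ≤ k :=
  ⟨fun hik => hleast k (hik.lt_of_ne hki.symm), hij.le.trans⟩

theorem assocMatrix_transpose {n : ℕ} (po : PartialOrder (Fin n)) :
    (assocMatrix po)ᵀ = assocMatrix (@OrderDual.instPartialOrder (Fin n) po) :=
  rfl

theorem assocMatrix_row_sub_row_eq_single {n : ℕ} (po : PartialOrder (Fin n)) {i j : Fin n}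
    (hij : po.lt i j) (hleast : ∀ k, po.lt i k → po.le j k) :
    assocMatrix po i - assocMatrix po j = Pi.single i (-1) := by
  ext k
  obtain rfl | hki := eq_or_ne k i
  · simp [assocMatrix, (po.lt_iff_le_not_ge _ _).1 hij]
  · simp [assocMatrix, hki, @le_iff_le_of_lt_of_forall_lt_imp_le _ po _ _ _ hij hleast hki]

theorem det_assocMatrix_of_least_gt {n : ℕ} (po : PartialOrder (Fin (n + 1))) {i j : Fin (n + 1)}
    (hij : po.lt i j) (hleast : ∀ k, po.lt i k → po.le j k) :
    (assocMatrix po).det = - ((assocMatrix po).submatrix i.succAbove i.succAbove).det := by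
  simpa using det_eq_mul_det_submatrix_of_row_sub_eq_single _ (@ne_of_lt _ po.toPreorder _ _ hij)
    (assocMatrix_row_sub_row_eq_single po hij hleast)

/-- Removing a beat point changes the sign of the determinant. -/
theorem stmt9 {n : ℕ} (po : PartialOrder (Fin (n + 1))) (i : Fin (n + 1))
    (h : IsBeatPoint po i) :
    (assocMatrix po).det =
      - ((assocMatrix po).submatrix i.succAbove i.succAbove).det := by
  rcases h with ⟨j, hij, hleast⟩ | ⟨j, hji, hgreatest⟩
  · exact det_assocMatrix_of_least_gt po hij hleast
  · rw [← det_transpose, assocMatrix_transpose,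
      det_assocMatrix_of_least_gt (@OrderDual.instPartialOrder _ po) hji hgreatest,
      ← assocMatrix_transpose, ← transpose_submatrix, det_transpose]
end

section
/- If i : Fin n is a beat point of the poset (Fin n, ≤), then rank M = rank (M∖i) + 1, where M∖i is the matrix obtained from M by deleting row i and column i. Consequently, the quantity n − rank M is unchanged when a beat point is removed, so it is a homotopy invariant of the finite T₀-space. -/
open scoped Classical

/-!
If `i` is an up beat point covered by `j`, then `i ≤ k ↔ j ≤ k` for every `k ≠ i`, so row `j` of
`M` is row `i` plus the unit vector `eᵢ`. Subtracting row `j` from row `i` and then clearing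
column `i` with the new row `-eᵢ` are invertible row operations that do not touch `M∖i`, and they
turn `M` into the block-diagonal matrix `M∖i ⊕ (-1)`. A down beat point gives the same relation
between columns `i` and `j`. Ranks of block-diagonal integer matrices add because submodules of
free ℤ-modules are free.
-/

theorem Submodule.finrank_prod {R M N : Type*} [Ring R] [StrongRankCondition R]
    [AddCommGroup M] [AddCommGroup N] [Module R M] [Module R N]
    (p : Submodule R M) (q : Submodule R N) [Module.Free R p] [Module.Free R q]
    [Module.Finite R p] [Module.Finite R q] :
    Module.finrank R (p.prod q) = Module.finrank R p + Module.finrank R q := by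
  have hinj : Function.Injective (p.subtype.prodMap q.subtype) := by
    rw [LinearMap.coe_prodMap]
    exact p.injective_subtype.prodMap q.injective_subtype
  rw [← Module.finrank_prod, ← LinearMap.finrank_range_of_inj hinj, LinearMap.range_prodMap,
    Submodule.range_subtype, Submodule.range_subtype]

namespace Matrix

section Ring

variable {R : Type*} [Ring R]

theorem isUnit_one_add_vecMulVec {n : Type*} [Fintype n] [DecidableEq n]
    {u v : n → R} (h : v ⬝ᵥ u = 0) : IsUnit (1 + vecMulVec u v) :=
  IsNilpotent.isUnit_one_add ⟨2, by rw [sq, vecMulVec_mul_vecMulVec, h, zero_smul, vecMulVec_zero]⟩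

theorem one_add_vecMulVec_single_mul_apply {n : Type*} [Fintype n] [DecidableEq n]
    (u : n → R) (j : n) (M : Matrix n n R) (k l : n) :
    ((1 + vecMulVec u (Pi.single j 1)) * M) k l = M k l + u k * M j l := by
  simp [add_mul, vecMulVec_mul, single_vecMul, vecMulVec_apply]

theorem exists_isUnit_mul_eq_pivot [Nontrivial R] {n : ℕ}
    (M : Matrix (Fin (n + 1)) (Fin (n + 1)) R) {i j : Fin (n + 1)}
    (hrow : M j = M i + Pi.single i 1) :
    ∃ P : Matrix (Fin (n + 1)) (Fin (n + 1)) R, IsUnit P ∧ (P * M) i i = -1 ∧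
      (∀ k, k ≠ i → (P * M) i k = 0) ∧ (∀ k, k ≠ i → (P * M) k i = 0) ∧
      (P * M).submatrix i.succAbove i.succAbove = M.submatrix i.succAbove i.succAbove := by
  have hji : j ≠ i := by
    rintro rfl
    simpa using congrFun hrow j
  let P₁ := 1 + vecMulVec (-Pi.single i 1) (Pi.single j (1 : R))
  have hP₁ : ∀ k l, (P₁ * M) k l =
      if k = i then -(Pi.single i 1 : Fin (n + 1) → R) l else M k l := by
    intro k l
    rw [one_add_vecMulVec_single_mul_apply, hrow]
    split_ifs with hk <;> simp [hk]
  let v : Fin (n + 1) → R := Function.update (fun k => M k i) i 0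
  let P₂ := 1 + vecMulVec v (Pi.single i (1 : R))
  have hP₂P₁ : ∀ k l, (P₂ * P₁ * M) k l =
      if k = i then -(Pi.single i 1 : Fin (n + 1) → R) l else if l = i then 0 else M k l := by
    intro k l
    rw [Matrix.mul_assoc, one_add_vecMulVec_single_mul_apply, hP₁, hP₁]
    by_cases hk : k = i <;> by_cases hl : l = i <;> simp [hk, hl, v]
  refine ⟨P₂ * P₁, (isUnit_one_add_vecMulVec (by simp [v])).mul
    (isUnit_one_add_vecMulVec (by simp [hji])), ?_, fun k hk => ?_, fun k hk => ?_, ?_⟩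
  · simp [hP₂P₁]
  · simp [hP₂P₁, hk]
  · simp [hP₂P₁, hk]
  · ext k l
    simp [hP₂P₁, Fin.succAbove_ne]

end Ring

section PrincipalIdealDomain

variable {R : Type*} [CommRing R] [IsDomain R] [IsPrincipalIdealRing R]

theorem rank_fromBlocks_zero_zero {m n p q : Type*} [Fintype n] [Fintype q]
    (A : Matrix m n R) (D : Matrix p q R) : (fromBlocks A 0 0 D).rank = A.rank + D.rank := by
  have hmulVecLin : (fromBlocks A 0 0 D).mulVecLin =
      (LinearEquiv.sumArrowLequivProdArrow m p R R).symm.toLinearMap ∘ₗ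
        A.mulVecLin.prodMap D.mulVecLin ∘ₗ
          (LinearEquiv.sumArrowLequivProdArrow n q R R).toLinearMap := by
    refine LinearMap.ext fun x => funext fun k => ?_
    rcases k with k | k <;>
      simp [fromBlocks_mulVec, LinearEquiv.sumArrowLequivProdArrow, Equiv.sumArrowEquivProdArrow]
  rw [rank, hmulVecLin, LinearMap.range_comp,
    LinearMap.range_comp_of_range_eq_top _ (LinearEquiv.range _), LinearEquiv.finrank_map_eq,
    LinearMap.range_prodMap, Submodule.finrank_prod]
  rfl

theorem rank_eq_rank_submatrix_succAbove_add_one {n : ℕ}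
    (N : Matrix (Fin (n + 1)) (Fin (n + 1)) R) (i : Fin (n + 1)) (hii : IsUnit (N i i))
    (hrow : ∀ k, k ≠ i → N i k = 0) (hcol : ∀ k, k ≠ i → N k i = 0) :
    N.rank = (N.submatrix i.succAbove i.succAbove).rank + 1 := by
  let e : Fin n ⊕ Unit ≃ Fin (n + 1) :=
    ((finSuccEquiv' i).trans (Equiv.optionEquivSumPUnit.{0} _)).symm
  have hblocks : N.submatrix e e =
      fromBlocks (N.submatrix i.succAbove i.succAbove) 0 0 (of fun _ _ => N i i) := by
    ext (k | k) (l | l) <;> simp [e, hrow, hcol, Fin.succAbove_ne]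
  have hcorner : (of fun _ _ => N i i : Matrix Unit Unit R).rank = 1 := by
    rw [rank_of_isUnit _ ((isUnit_iff_isUnit_det _).2 (by rwa [det_unique]))]
    rfl
  rw [← rank_submatrix N e e, hblocks, rank_fromBlocks_zero_zero, hcorner]

theorem rank_eq_rank_submatrix_succAbove_add_one_of_row_eq {n : ℕ}
    (M : Matrix (Fin (n + 1)) (Fin (n + 1)) R) {i j : Fin (n + 1)}
    (hrow : M j = M i + Pi.single i 1) :
    M.rank = (M.submatrix i.succAbove i.succAbove).rank + 1 := by
  obtain ⟨P, hP, hii, hrowi, hcoli, hsub⟩ := exists_isUnit_mul_eq_pivot M hrow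
  rw [← rank_mul_eq_right_of_isUnit_det P M ((isUnit_iff_isUnit_det P).1 hP), ← hsub]
  exact rank_eq_rank_submatrix_succAbove_add_one _ i (hii ▸ isUnit_one.neg) hrowi hcoli

theorem rank_eq_rank_submatrix_succAbove_add_one_of_col_eq {n : ℕ}
    (M : Matrix (Fin (n + 1)) (Fin (n + 1)) R) {i j : Fin (n + 1)}
    (hcol : Mᵀ j = Mᵀ i + Pi.single i 1) :
    M.rank = (M.submatrix i.succAbove i.succAbove).rank + 1 := by
  obtain ⟨P, hP, hii, hrowi, hcoli, hsub⟩ := exists_isUnit_mul_eq_pivot Mᵀ hcol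
  have hPt : IsUnit Pᵀ.det := by
    rw [det_transpose]
    exact (isUnit_iff_isUnit_det P).1 hP
  have hMPt : M * Pᵀ = (P * Mᵀ)ᵀ := by rw [transpose_mul, transpose_transpose]
  have hsubt :
      (M * Pᵀ).submatrix i.succAbove i.succAbove = M.submatrix i.succAbove i.succAbove := by
    rw [hMPt, ← transpose_submatrix, hsub, transpose_submatrix, transpose_transpose]
  rw [← rank_mul_eq_left_of_isUnit_det Pᵀ M hPt, ← hsubt]
  refine rank_eq_rank_submatrix_succAbove_add_one _ i ?_ (fun k hk => ?_) (fun k hk => ?_) <;>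
    rw [hMPt, transpose_apply]
  exacts [hii ▸ isUnit_one.neg, hcoli k hk, hrowi k hk]

end PrincipalIdealDomain

end Matrix

theorem assocMatrix_row_eq_add_single {n : ℕ} (po : PartialOrder (Fin n)) {i j : Fin n}
    (hij : po.lt i j) (hleast : ∀ k, po.lt i k → po.le j k) :
    assocMatrix po j = assocMatrix po i + Pi.single i 1 := by
  obtain ⟨hle, hnle⟩ := (po.lt_iff_le_not_ge i j).1 hij
  funext k
  by_cases hk : k = i
  · subst hk
    simp [assocMatrix, hnle]
  · have hiff : po.le i k ↔ po.le j k :=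
      ⟨fun hik => hleast k ((po.lt_iff_le_not_ge i k).2
        ⟨hik, fun hki => hk (po.le_antisymm k i hki hik)⟩), po.le_trans i j k hle⟩
    simp [assocMatrix, hiff, hk]

open Matrix in
theorem assocMatrix_transpose_row_eq_add_single {n : ℕ} (po : PartialOrder (Fin n))
    {i j : Fin n} (hji : po.lt j i) (hgreatest : ∀ k, po.lt k i → po.le k j) :
    (assocMatrix po)ᵀ j = (assocMatrix po)ᵀ i + Pi.single i 1 := by
  obtain ⟨hle, hnle⟩ := (po.lt_iff_le_not_ge j i).1 hji
  funext k
  by_cases hk : k = i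
  · subst hk
    simp [assocMatrix, hnle]
  · have hiff : po.le k i ↔ po.le k j :=
      ⟨fun hki => hgreatest k ((po.lt_iff_le_not_ge k i).2
        ⟨hki, fun hik => hk (po.le_antisymm k i hki hik)⟩), fun hkj => po.le_trans k j i hkj hle⟩
    simp [assocMatrix, hiff, hk]

/-- Removing a beat point decreases the rank by exactly one; hence the
difference between the size of the space and the rank is unchanged. -/
theorem stmt10 {n : ℕ} (po : PartialOrder (Fin (n + 1))) (i : Fin (n + 1))
    (h : IsBeatPoint po i) :
    (assocMatrix po).rank =
        ((assocMatrix po).submatrix i.succAbove i.succAbove).rank + 1 ∧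
      (n + 1) - (assocMatrix po).rank =
        n - ((assocMatrix po).submatrix i.succAbove i.succAbove).rank := by
  have hrank : (assocMatrix po).rank =
      ((assocMatrix po).submatrix i.succAbove i.succAbove).rank + 1 := by
    rcases h with ⟨j, hij, hleast⟩ | ⟨j, hji, hgreatest⟩
    · exact Matrix.rank_eq_rank_submatrix_succAbove_add_one_of_row_eq _
        (assocMatrix_row_eq_add_single po hij hleast)
    · exact Matrix.rank_eq_rank_submatrix_succAbove_add_one_of_col_eq _
        (assocMatrix_transpose_row_eq_add_single po hji hgreatest)
  exact ⟨hrank, by omega⟩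
end

section
/- If the poset (Fin n, ≤) is dismantlable (equivalently, the associated finite T₀-space is contractible), then det M = 0. -/
open scoped Classical

/-- `x` is a beat point of the induced subposet on the finite set `s`. -/
def IsBeatPointIn {n : ℕ} (po : PartialOrder (Fin n)) (s : Finset (Fin n))
    (x : Fin n) : Prop :=
  (∃ y ∈ s, po.lt x y ∧ ∀ z ∈ s, po.lt x z → po.le y z) ∨
    (∃ y ∈ s, po.lt y x ∧ ∀ z ∈ s, po.lt z x → po.le z y)

/-- A finite (sub)poset is dismantlable if it can be reduced to a single point
by successively removing beat points of the remaining induced subposet.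
By Stong's theorem this is equivalent to contractibility of the associated
finite space. -/
inductive Dismantlable {n : ℕ} (po : PartialOrder (Fin n)) :
    Finset (Fin n) → Prop
  | single (x : Fin n) : Dismantlable po {x}
  | step (s : Finset (Fin n)) (x : Fin n) (hx : x ∈ s)
      (hbeat : IsBeatPointIn po s x)
      (h : Dismantlable po (s.erase x)) : Dismantlable po s

/-!
If `x` is an up beat point of `s` and `y` the least point of `s` above it, then rows `x` and `y`
of the matrix restricted to `s` agree except in column `x`, where they read `0` and `1`.
Subtracting row `y` from row `x` leaves `-eₓ`, so the determinant on `s` is minus the determinant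
on `s \ {x}`; down beat points are handled the same way with columns. A dismantling ends at a
single point, whose `1 × 1` matrix is `0`.
-/

namespace Matrix

variable {ι R : Type*} [DecidableEq ι] [CommRing R]

theorem det_submatrix_subtype_ne (A : Matrix ι ι R) (s : Finset ι) {x : ι} (hx : x ∈ s) :
    ((A.submatrix (↑) (↑) : Matrix s s R).submatrix (↑) (↑) :
      Matrix {j : s // j ≠ ⟨x, hx⟩} {j : s // j ≠ ⟨x, hx⟩} R).det =
      (A.submatrix (↑) (↑) : Matrix (s.erase x) (s.erase x) R).det := by
  let e : {j : s // j ≠ ⟨x, hx⟩} ≃ s.erase x :=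
    { toFun := fun j => ⟨j, Finset.mem_erase.2 ⟨fun hj => j.2 (Subtype.ext hj), j.1.2⟩⟩
      invFun := fun j => ⟨⟨j, Finset.mem_of_mem_erase j.2⟩,
        fun hj => Finset.ne_of_mem_erase j.2 (congrArg Subtype.val hj)⟩
      left_inv := fun _ => rfl
      right_inv := fun _ => rfl }
  exact det_submatrix_equiv_self e (A.submatrix (↑) (↑) : Matrix (s.erase x) (s.erase x) R)

theorem det_eq_sub_mul_det_submatrix_ne_of_row_eq [Fintype ι] (A : Matrix ι ι R) {x y : ι}
    (hxy : x ≠ y) (h : ∀ j, j ≠ x → A x j = A y j) :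
    A.det = (A x x - A y x) * (A.submatrix ((↑) : {j // j ≠ x} → ι) (↑)).det := by
  set B := A.updateRow x (A x + (-1 : R) • A y)
  have hBx : ∀ j, B x j = if j = x then A x x - A y x else 0 := by
    intro j
    split_ifs with hj
    · simp [B, hj, sub_eq_add_neg]
    · simp [B, h j hj]
  have hB : B.det = A.det := det_updateRow_add_smul_self A hxy (-1)
  rw [← hB, B.twoBlockTriangular_det' (· = x) (by rintro _ rfl j hj; simp [hBx, hj])]
  congr 1
  · exact (det_toSquareBlock_id B x).trans (by simp [hBx])
  · congr 1
    ext i j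
    simp only [toSquareBlockProp, toBlock_apply, submatrix_apply]
    exact congrFun (updateRow_ne i.2) (j : ι)

theorem det_submatrix_finset_of_row_eq (A : Matrix ι ι R) {s : Finset ι} {x y : ι}
    (hx : x ∈ s) (hy : y ∈ s) (hxy : x ≠ y) (h : ∀ j ∈ s, j ≠ x → A x j = A y j) :
    (A.submatrix (↑) (↑) : Matrix s s R).det =
      (A x x - A y x) * (A.submatrix (↑) (↑) : Matrix (s.erase x) (s.erase x) R).det := by
  rw [det_eq_sub_mul_det_submatrix_ne_of_row_eq (A.submatrix (↑) (↑) : Matrix s s R)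
    (x := ⟨x, hx⟩) (y := ⟨y, hy⟩) (by simpa using hxy)
    (fun j hj => h j j.2 (by simpa [Subtype.ext_iff] using hj)),
    det_submatrix_subtype_ne]
  rfl

theorem det_submatrix_finset_of_col_eq (A : Matrix ι ι R) {s : Finset ι} {x y : ι}
    (hx : x ∈ s) (hy : y ∈ s) (hxy : x ≠ y) (h : ∀ i ∈ s, i ≠ x → A i x = A i y) :
    (A.submatrix (↑) (↑) : Matrix s s R).det =
      (A x x - A x y) * (A.submatrix (↑) (↑) : Matrix (s.erase x) (s.erase x) R).det := by
  rw [← det_transpose, transpose_submatrix, det_submatrix_finset_of_row_eq Aᵀ hx hy hxy h,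
    ← transpose_submatrix, det_transpose]
  rfl

end Matrix

section

variable {n : ℕ} {po : PartialOrder (Fin n)}

theorem det_assocMatrix_submatrix_of_isBeatPointIn {s : Finset (Fin n)} {x : Fin n}
    (hx : x ∈ s) (hbeat : IsBeatPointIn po s x) :
    ((assocMatrix po).submatrix (↑) (↑) : Matrix s s ℤ).det =
      -((assocMatrix po).submatrix (↑) (↑) : Matrix (s.erase x) (s.erase x) ℤ).det := by
  rcases hbeat with ⟨y, hy, hxy, hmin⟩ | ⟨y, hy, hyx, hmax⟩
  · have hrow : ∀ j ∈ s, j ≠ x → (po.le x j ↔ po.le y j) := fun j hj hjx =>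
      ⟨fun h => hmin j hj
          ((po.lt_iff_le_not_ge x j).2 ⟨h, fun h' => hjx (po.le_antisymm _ _ h' h)⟩),
        po.le_trans _ _ _ ((po.lt_iff_le_not_ge x y).1 hxy).1⟩
    rw [Matrix.det_submatrix_finset_of_row_eq _ hx hy (@ne_of_lt _ po.toPreorder _ _ hxy)
      (fun j hj hjx => by simp [assocMatrix, hrow j hj hjx])]
    simp [assocMatrix, ((po.lt_iff_le_not_ge x y).1 hxy).2]
  · have hcol : ∀ i ∈ s, i ≠ x → (po.le i x ↔ po.le i y) := fun i hi hix =>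
      ⟨fun h => hmax i hi
          ((po.lt_iff_le_not_ge i x).2 ⟨h, fun h' => hix (po.le_antisymm _ _ h h')⟩),
        fun h => po.le_trans _ _ _ h ((po.lt_iff_le_not_ge y x).1 hyx).1⟩
    rw [Matrix.det_submatrix_finset_of_col_eq _ hx hy (@ne_of_gt _ po.toPreorder _ _ hyx)
      (fun i hi hix => by simp [assocMatrix, hcol i hi hix])]
    simp [assocMatrix, ((po.lt_iff_le_not_ge y x).1 hyx).2]

theorem Dismantlable.det_assocMatrix_submatrix_eq_zero {s : Finset (Fin n)}
    (h : Dismantlable po s) :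
    ((assocMatrix po).submatrix (↑) (↑) : Matrix s s ℤ).det = 0 := by
  induction h with
  | single x =>
    exact Matrix.det_eq_zero_of_row_eq_zero ⟨x, Finset.mem_singleton_self x⟩ fun j => by
      simp [assocMatrix, Finset.mem_singleton.1 j.2]
  | step s x hx hbeat _ ih =>
    rw [det_assocMatrix_submatrix_of_isBeatPointIn hx hbeat, ih, neg_zero]

end

/-- If the poset is dismantlable (equivalently, the associated finite
`T₀`-space is contractible), then the determinant of its matrix vanishes. -/
theorem stmt11 {n : ℕ} (po : PartialOrder (Fin n))
    (h : Dismantlable po Finset.univ) :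
    (assocMatrix po).det = 0 := by
  rw [← Matrix.det_submatrix_equiv_self (Equiv.subtypeUnivEquiv Finset.mem_univ)]
  exact h.det_assocMatrix_submatrix_eq_zero
end

section
/- If the poset (Fin n, ≤) is dismantlable (equivalently, the associated finite T₀-space is contractible), then rank M = n − 1; that is, n − rank M = 1. -/
open scoped Classical

/-!
Removing a beat point does not change the rank, once the matrix of the induced subposet on `s`
is padded with the identity outside `s`. If `y` covers the up beat point `x` in `s`, then
`x ≤ j ↔ y ≤ j` for every `j ∈ s` other than `x`, so row `x` is row `y` minus `eₓ`: one row
operation makes row `x` equal to `-eₓ`, and clearing column `x` with it yields the padded matrix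
of `s \ {x}`. Down beat points are the same with columns. After dismantling down to a point
the padded matrix is diagonal with a single zero, of rank `n - 1`.
-/

namespace Matrix

variable {n R : Type*} [DecidableEq n] [CommRing R]

def unitRowCol (A : Matrix n n R) (x : n) : Matrix n n R :=
  of fun i j => if i = x ∨ j = x then (1 : Matrix n n R) i j else A i j

theorem transpose_unitRowCol (A : Matrix n n R) (x : n) :
    (unitRowCol A x)ᵀ = unitRowCol Aᵀ x := by
  ext i j
  simp only [unitRowCol, transpose_apply, of_apply, one_apply, or_comm, eq_comm]

theorem unitRowCol_updateRow (A : Matrix n n R) (x : n) (r : n → R) :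
    unitRowCol (A.updateRow x r) x = unitRowCol A x := by
  ext i j
  by_cases hi : i = x <;> simp [unitRowCol, hi]

variable [Fintype n]

theorem det_one_add_vecMulVec (u v : n → R) : (1 + vecMulVec u v).det = 1 + v ⬝ᵥ u := by
  rw [vecMulVec_eq Unit, det_one_add_replicateCol_mul_replicateRow]

theorem mul_eq_unitRowCol_of_row_eq_neg_single {A : Matrix n n R} {x : n}
    (h : A x = -Pi.single x 1) :
    (1 + vecMulVec (Aᵀ x - Pi.single x 1) (Pi.single x 1)) * A = unitRowCol A x := by
  ext i j
  have hrow (k : n) : A x k = -(Pi.single x (1 : R) : n → R) k := by rw [h]; rfl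
  rw [add_mul, one_mul, vecMulVec_mul, single_one_vecMul]
  by_cases hi : i = x <;> by_cases hj : j = x
  all_goals simp [unitRowCol, vecMulVec_apply, one_apply, hrow, hi, hj, eq_comm (a := x)]

theorem exists_isUnit_det_mul_eq_unitRowCol [Nontrivial R] {A : Matrix n n R} {x y : n}
    (h : A x = A y - Pi.single x 1) :
    ∃ P : Matrix n n R, IsUnit P.det ∧ P * A = unitRowCol A x := by
  -- The transvection turns row `x` into `-eₓ`; the rank-one update then clears column `x`
  -- and flips the sign of row `x`.
  have hxy : x ≠ y := by
    rintro rfl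
    simpa [eq_sub_iff_add_eq] using congrFun h x
  set A₁ := transvection x y (-1) * A with hA₁_def
  have hA₁ : A₁ = A.updateRow x (-Pi.single x 1) := by
    ext i j
    by_cases hi : i = x
    · subst hi; simp [A₁, h]; abel
    · simp [A₁, hi]
  have hA₁x : A₁ x = -Pi.single x 1 := by rw [hA₁, updateRow_self]
  refine ⟨(1 + vecMulVec (A₁ᵀ x - Pi.single x 1) (Pi.single x 1)) * transvection x y (-1),
    ?_, ?_⟩
  · rw [det_mul, det_one_add_vecMulVec, det_transvection_of_ne _ _ hxy, single_one_dotProduct]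
    simp [hA₁x]
  · rw [mul_assoc, ← hA₁_def, mul_eq_unitRowCol_of_row_eq_neg_single hA₁x, hA₁,
      unitRowCol_updateRow]

theorem rank_unitRowCol_of_row_eq [Nontrivial R] {A : Matrix n n R} {x y : n}
    (h : A x = A y - Pi.single x 1) : (unitRowCol A x).rank = A.rank := by
  obtain ⟨P, hP, hPA⟩ := exists_isUnit_det_mul_eq_unitRowCol h
  rw [← hPA, rank_mul_eq_right_of_isUnit_det _ _ hP]

theorem rank_unitRowCol_of_col_eq [Nontrivial R] {A : Matrix n n R} {x y : n}
    (h : Aᵀ x = Aᵀ y - Pi.single x 1) : (unitRowCol A x).rank = A.rank := by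
  obtain ⟨P, hP, hPA⟩ := exists_isUnit_det_mul_eq_unitRowCol h
  have hAP : unitRowCol A x = A * Pᵀ := by
    rw [← transpose_transpose (unitRowCol A x), transpose_unitRowCol, ← hPA, transpose_mul,
      transpose_transpose]
  rw [hAP, rank_mul_eq_left_of_isUnit_det _ _ (by rwa [det_transpose])]

theorem rank_diagonal_ite_mem [Nontrivial R] (s : Finset n) :
    (diagonal fun i => if i ∈ s then (1 : R) else 0).rank = s.card := by
  refine le_antisymm (rank_le_card_of_support_subset _ s <| Function.support_subset_iff'.2
    fun i hi => funext fun j => by simp [diagonal_apply, Finset.mem_coe.not.1 hi]) ?_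
  have hsub : (diagonal fun i => if i ∈ s then (1 : R) else 0).submatrix
      ((↑) : s → n) ((↑) : s → n) = 1 := by
    ext ⟨i, hi⟩ ⟨j, hj⟩
    simp [one_apply, diagonal_apply, hi]
  calc s.card = (1 : Matrix s s R).rank := by rw [rank_one, Fintype.card_coe]
    _ ≤ _ := hsub ▸ rank_submatrix_le _ _ _

end Matrix

section Poset

open Matrix

variable {n : ℕ}

noncomputable def assocMatrixOn (po : PartialOrder (Fin n)) (s : Finset (Fin n)) :
    Matrix (Fin n) (Fin n) ℤ :=
  of fun i j => if i ∈ s ∧ j ∈ s then assocMatrix po i j else (1 : Matrix _ _ ℤ) i j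

theorem assocMatrixOn_univ (po : PartialOrder (Fin n)) :
    assocMatrixOn po Finset.univ = assocMatrix po := by
  ext i j
  simp [assocMatrixOn]

theorem assocMatrixOn_singleton (po : PartialOrder (Fin n)) (x : Fin n) :
    assocMatrixOn po {x} = diagonal fun i => if i ∈ Finset.univ.erase x then 1 else 0 := by
  ext i j
  by_cases hi : i = x <;> by_cases hj : j = x
  all_goals simp [assocMatrixOn, assocMatrix, diagonal_apply, one_apply, hi, hj, eq_comm (a := x)]

theorem assocMatrixOn_erase (po : PartialOrder (Fin n)) (s : Finset (Fin n)) (x : Fin n) :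
    assocMatrixOn po (s.erase x) = (assocMatrixOn po s).unitRowCol x := by
  ext i j
  by_cases hi : i = x <;> by_cases hj : j = x
  all_goals simp [assocMatrixOn, unitRowCol, hi, hj]

theorem assocMatrixOn_row_eq_sub_single {po : PartialOrder (Fin n)} {s : Finset (Fin n)}
    {x y : Fin n} (hx : x ∈ s) (hy : y ∈ s) (hxy : po.lt x y)
    (hmin : ∀ z ∈ s, po.lt x z → po.le y z) :
    assocMatrixOn po s x = assocMatrixOn po s y - Pi.single x 1 := by
  have hyx : ¬ po.le y x := ((po.lt_iff_le_not_ge x y).1 hxy).2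
  ext j
  by_cases hj : j = x
  · subst hj
    simp [assocMatrixOn, assocMatrix, hx, hy, hyx]
  by_cases hjs : j ∈ s
  · have hxj : po.le x j ↔ po.le y j :=
      ⟨fun hxj => hmin j hjs <|
          (po.lt_iff_le_not_ge x j).2 ⟨hxj, fun hjx => hj (po.le_antisymm _ _ hjx hxj)⟩,
        po.le_trans _ _ _ hxy.le⟩
    simp [assocMatrixOn, assocMatrix, hx, hy, hjs, hj, hxj]
  · simp [assocMatrixOn, hjs, hj, one_apply, ne_of_mem_of_not_mem hx hjs,
      ne_of_mem_of_not_mem hy hjs]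

theorem transpose_assocMatrixOn (po : PartialOrder (Fin n)) (s : Finset (Fin n)) :
    (assocMatrixOn po s)ᵀ = assocMatrixOn (@OrderDual.instPartialOrder (Fin n) po) s := by
  ext i j
  simp only [transpose_apply, assocMatrixOn, of_apply, and_comm (a := j ∈ s), one_apply,
    @eq_comm _ j i]
  rfl

theorem rank_assocMatrixOn_erase {po : PartialOrder (Fin n)} {s : Finset (Fin n)} {x : Fin n}
    (hx : x ∈ s) (hbeat : IsBeatPointIn po s x) :
    (assocMatrixOn po (s.erase x)).rank = (assocMatrixOn po s).rank := by
  rw [assocMatrixOn_erase]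
  rcases hbeat with ⟨y, hy, hxy, hmin⟩ | ⟨y, hy, hyx, hmax⟩
  · exact rank_unitRowCol_of_row_eq (assocMatrixOn_row_eq_sub_single hx hy hxy hmin)
  · -- A down beat point of `po` is an up beat point of the dual order.
    refine rank_unitRowCol_of_col_eq (y := y) ?_
    rw [transpose_assocMatrixOn]
    exact assocMatrixOn_row_eq_sub_single hx hy hyx hmax

theorem Dismantlable.nonempty {po : PartialOrder (Fin n)} {s : Finset (Fin n)}
    (h : Dismantlable po s) : s.Nonempty := by
  induction h with
  | single x => exact Finset.singleton_nonempty x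
  | step s x hx _ _ _ => exact ⟨x, hx⟩

theorem rank_assocMatrixOn_of_dismantlable {po : PartialOrder (Fin n)} {s : Finset (Fin n)}
    (h : Dismantlable po s) : (assocMatrixOn po s).rank = n - 1 := by
  induction h with
  | single x =>
    rw [assocMatrixOn_singleton, rank_diagonal_ite_mem,
      Finset.card_erase_of_mem (Finset.mem_univ x), Finset.card_univ, Fintype.card_fin]
  | step s x hx hbeat _ ih => rw [← rank_assocMatrixOn_erase hx hbeat, ih]

end Poset

/-- If the poset is dismantlable (equivalently, the associated finite space is
contractible), then the rank of its matrix is `n - 1`, i.e. `n - rank M = 1`. -/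
theorem stmt12 {n : ℕ} (po : PartialOrder (Fin n))
    (h : Dismantlable po Finset.univ) :
    (assocMatrix po).rank = n - 1 ∧ n - (assocMatrix po).rank = 1 := by
  have hrank : (assocMatrix po).rank = n - 1 := by
    rw [← assocMatrixOn_univ, rank_assocMatrixOn_of_dismantlable h]
  have hn : 0 < n := Fin.pos_iff_nonempty.2 h.nonempty.to_type
  exact ⟨hrank, by omega⟩
end

section
/- Let i : Fin n be a weak beat point: either the induced subposet on {k | k < i} is dismantlable (i is a down weak beat point with contractible punctured down-set) or the induced subposet on {k | i < k} is dismantlable (i is an up weak beat point with contractible punctured up-set). Then det M = − det (M∖i), where M∖i is the matrix obtained from M by deleting row i and column i. -/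
open scoped Classical

/-!
Write `χ(s) = chainSum s` for the alternating count `∑ (-1) ^ #c` of the chains `c ⊆ s`,
minus the reduced Euler characteristic of its order complex. With `ζ` the zeta matrix,
`M = 𝟙𝟙ᵀ - ζ = ζ (v𝟙ᵀ - 1)` where `v j = χ(P_{>j})`, so the matrix determinant lemma gives
`det M = (-1) ^ |P| χ(P)`. The chains through `i` contribute `-χ(P_{<i}) χ(P_{>i})` to `χ(P)`,
and a dismantlable poset has `χ = 0`: a point has `χ = 0`, and removing a beat point does not
change `χ`, because its link is a cone. Hence `χ(P) = χ(P ∖ i)`, and the sign comes from the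
drop in size.
-/

open Finset Matrix

section ChainSum

variable {α : Type*} [PartialOrder α]

noncomputable def chainSum (s : Finset α) : ℤ :=
  ∑ c ∈ s.powerset.filter fun c : Finset α => IsChain (· ≤ ·) (c : Set α), (-1) ^ #c

theorem chainSum_empty : chainSum (∅ : Finset α) = 1 := by
  simp [chainSum, sum_filter]

theorem chainSum_image {β : Type*} [PartialOrder β] [DecidableEq β] (f : α ↪o β)
    (s : Finset α) : chainSum (s.image f) = chainSum s := by
  rw [chainSum, chainSum, powerset_image, sum_filter,
    sum_image (image_injective f.injective).injOn, sum_filter]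
  refine sum_congr rfl fun c _ => ?_
  rw [coe_image, IsChain.image_embedding_iff, card_image_of_injective _ f.injective]

/-- Splitting off the chains through `x`: these are the cones `insert x c` over the chains `c`
of the points of `s` strictly comparable with `x`. -/
theorem chainSum_eq_chainSum_erase_sub [DecidableEq α] {s : Finset α} {x : α} (hx : x ∈ s) :
    chainSum s = chainSum (s.erase x) - chainSum {z ∈ s | z < x ∨ x < z} := by
  have hlink : (s.erase x).powerset.filter
        (fun c : Finset α => IsChain (· ≤ ·) (↑(insert x c) : Set α)) =
      {z ∈ s | z < x ∨ x < z}.powerset.filter fun c : Finset α => IsChain (· ≤ ·) (c : Set α) := by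
    ext c
    simp only [mem_filter, mem_powerset, coe_insert, subset_iff, mem_erase]
    constructor
    · rintro ⟨hcs, hch⟩
      refine ⟨fun z hz => ⟨(hcs hz).2, ?_⟩, hch.mono (Set.subset_insert x _)⟩
      have hzx := (hcs hz).1
      rcases hch (Set.mem_insert x _) (Set.mem_insert_of_mem x hz) hzx.symm with h | h
      · exact Or.inr (lt_of_le_of_ne h hzx.symm)
      · exact Or.inl (lt_of_le_of_ne h hzx)
    · rintro ⟨hcs, hch⟩
      refine ⟨fun z hz => ⟨?_, (hcs hz).1⟩, hch.insert fun z hz _ => ?_⟩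
      · rcases (hcs hz).2 with h | h
        exacts [h.ne, h.ne']
      · exact (hcs hz).2.symm.imp le_of_lt le_of_lt
  have hthrough : ∑ c ∈ (s.erase x).powerset,
      (if IsChain (· ≤ ·) (↑(insert x c) : Set α) then (-1 : ℤ) ^ #(insert x c) else 0) =
        -chainSum {z ∈ s | z < x ∨ x < z} := by
    rw [chainSum, ← hlink, sum_filter, ← sum_neg_distrib]
    refine sum_congr rfl fun c hc => ?_
    rw [card_insert_of_notMem fun h => notMem_erase x s (mem_powerset.1 hc h), pow_succ]
    split_ifs <;> simp
  conv_lhs => rw [chainSum, ← insert_erase hx, sum_filter, sum_powerset_insert (notMem_erase x s)]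
  rw [hthrough, sub_eq_add_neg]
  congr 1
  rw [chainSum, sum_filter]

theorem chainSum_eq_zero_of_forall_le_or_le [DecidableEq α] {s : Finset α} {y : α} (hy : y ∈ s)
    (hcomp : ∀ z ∈ s, z ≤ y ∨ y ≤ z) : chainSum s = 0 := by
  have hlink : {z ∈ s | z < y ∨ y < z} = s.erase y := by
    ext z
    simp only [mem_filter, mem_erase]
    constructor
    · rintro ⟨hz, h | h⟩
      exacts [⟨h.ne, hz⟩, ⟨h.ne', hz⟩]
    · rintro ⟨hne, hz⟩
      exact ⟨hz, (hcomp z hz).imp (lt_of_le_of_ne · hne) (lt_of_le_of_ne · hne.symm)⟩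
  rw [chainSum_eq_chainSum_erase_sub hy, hlink, sub_self]

theorem chainSum_singleton [DecidableEq α] (x : α) : chainSum {x} = 0 :=
  chainSum_eq_zero_of_forall_le_or_le (mem_singleton_self x) fun z hz => by
    rw [mem_singleton.1 hz]
    exact Or.inl le_rfl

theorem chainSum_erase_of_isBeatPoint [DecidableEq α] {s : Finset α} {x : α} (hx : x ∈ s)
    (hbeat : (∃ y ∈ s, x < y ∧ ∀ z ∈ s, x < z → y ≤ z) ∨
      (∃ y ∈ s, y < x ∧ ∀ z ∈ s, z < x → z ≤ y)) :
    chainSum (s.erase x) = chainSum s := by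
  rw [chainSum_eq_chainSum_erase_sub hx, eq_comm, sub_eq_self]
  obtain ⟨y, hy, hxy, hmin⟩ | ⟨y, hy, hyx, hmax⟩ := hbeat
  · refine chainSum_eq_zero_of_forall_le_or_le (mem_filter.2 ⟨hy, Or.inr hxy⟩) fun z hz => ?_
    obtain ⟨hz, hzx | hxz⟩ := mem_filter.1 hz
    exacts [Or.inl (hzx.trans hxy).le, Or.inr (hmin z hz hxz)]
  · refine chainSum_eq_zero_of_forall_le_or_le (mem_filter.2 ⟨hy, Or.inl hyx⟩) fun z hz => ?_
    obtain ⟨hz, hzx | hxz⟩ := mem_filter.1 hz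
    exacts [Or.inl (hmax z hz hzx), Or.inr (hyx.trans hxz).le]

/-- The order complex of an ordinal sum is a join, and joins multiply reduced Euler
characteristics. -/
theorem chainSum_union_of_forall_lt [DecidableEq α] {s t : Finset α}
    (hst : ∀ a ∈ s, ∀ b ∈ t, a < b) : chainSum (s ∪ t) = chainSum s * chainSum t := by
  have hdisj : Disjoint s t := disjoint_left.2 fun a ha hat => lt_irrefl a (hst a ha a hat)
  rw [chainSum, chainSum, chainSum, sum_mul_sum, ← sum_product']
  refine sum_nbij' (fun c => (c ∩ s, c ∩ t)) (fun p => p.1 ∪ p.2) ?_ ?_ ?_ ?_ ?_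
  · intro c hc
    obtain ⟨-, hch⟩ := mem_filter.1 hc
    simp only [mem_product, mem_filter, mem_powerset, coe_inter]
    exact ⟨⟨inter_subset_right, hch.mono Set.inter_subset_left⟩,
      ⟨inter_subset_right, hch.mono Set.inter_subset_left⟩⟩
  · rintro ⟨a, b⟩ hab
    simp only [mem_product, mem_filter, mem_powerset] at hab
    obtain ⟨⟨has, hach⟩, hbt, hbch⟩ := hab
    simp only [mem_filter, mem_powerset, coe_union]
    refine ⟨union_subset_union has hbt, isChain_union.2 ⟨hach, hbch, fun u hu v hv _ => ?_⟩⟩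
    exact Or.inl (hst u (has hu) v (hbt hv)).le
  · intro c hc
    rw [← inter_union_distrib_left, inter_eq_left.2 (mem_powerset.1 (mem_filter.1 hc).1)]
  · rintro ⟨a, b⟩ hab
    simp only [mem_product, mem_filter, mem_powerset] at hab
    obtain ⟨⟨has, -⟩, hbt, -⟩ := hab
    simp only [union_inter_distrib_right, inter_eq_left.2 has, inter_eq_left.2 hbt,
      disjoint_iff_inter_eq_empty.1 (hdisj.symm.mono_left hbt),
      disjoint_iff_inter_eq_empty.1 (hdisj.mono_left has), union_empty, empty_union]
  · intro c hc
    rw [← pow_add, ← card_union_of_disjoint (hdisj.mono inter_subset_right inter_subset_right),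
      ← inter_union_distrib_left, inter_eq_left.2 (mem_powerset.1 (mem_filter.1 hc).1)]

/-- Removing a minimal point `x` of `s` removes the cones over the chains of `{z ∈ s | x < z}`. -/
theorem sum_chainSum_filter_lt [DecidableEq α] (s : Finset α) :
    ∑ j ∈ s, chainSum {z ∈ s | j < z} = 1 - chainSum s := by
  induction s using Finset.strongInduction with
  | H s ih =>
    obtain rfl | hne := s.eq_empty_or_nonempty
    · simp [chainSum_empty]
    obtain ⟨x, hxmin⟩ := exists_minimal hne
    have hx : x ∈ s := hxmin.prop
    have hlink : {z ∈ s | z < x ∨ x < z} = {z ∈ s | x < z} :=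
      filter_congr fun z hz => or_iff_right (hxmin.not_lt hz)
    have hrest : ∀ j ∈ s.erase x, {z ∈ s | j < z} = {z ∈ s.erase x | j < z} := by
      intro j hj
      ext z
      simp only [mem_filter, mem_erase]
      constructor
      · rintro ⟨hz, hjz⟩
        exact ⟨⟨by rintro rfl; exact hxmin.not_lt (mem_of_mem_erase hj) hjz, hz⟩, hjz⟩
      · rintro ⟨⟨-, hz⟩, hjz⟩
        exact ⟨hz, hjz⟩
    rw [← add_sum_erase s (fun j => chainSum {z ∈ s | j < z}) hx,
      sum_congr rfl fun j hj => congrArg chainSum (hrest j hj), ih _ (erase_ssubset hx),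
      chainSum_eq_chainSum_erase_sub hx, hlink]
    ring

variable [Fintype α] [DecidableEq α]

theorem chainSum_univ_eq_chainSum_erase_sub_mul (x : α) :
    chainSum (univ : Finset α) =
      chainSum (univ.erase x) - chainSum {z | z < x} * chainSum {z | x < z} := by
  rw [chainSum_eq_chainSum_erase_sub (mem_univ x), filter_or,
    chainSum_union_of_forall_lt fun a ha b hb => (mem_filter.1 ha).2.trans (mem_filter.1 hb).2]

theorem sum_chainSum_filter_lt_of_le (a : α) :
    ∑ j ∈ ({z | a ≤ z} : Finset α), chainSum {z | j < z} = 1 := by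
  have hcone : chainSum ({z | a ≤ z} : Finset α) = 0 :=
    chainSum_eq_zero_of_forall_le_or_le (mem_filter.2 ⟨mem_univ a, le_rfl⟩)
      fun z hz => Or.inr (mem_filter.1 hz).2
  rw [← sub_zero (1 : ℤ), ← hcone, ← sum_chainSum_filter_lt]
  refine sum_congr rfl fun j hj => ?_
  rw [filter_filter]
  refine congrArg chainSum (filter_congr fun z _ => ?_)
  exact (and_iff_right_of_imp fun hjz => (mem_filter.1 hj).2.trans hjz.le).symm

end ChainSum

section ZetaMatrix

variable (α : Type*) [PartialOrder α] [Fintype α] [DecidableEq α]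

noncomputable def zetaMatrix : Matrix α α ℤ :=
  of fun a b => if a ≤ b then 1 else 0

/-- `ζ` is unitriangular along a linear extension of the order. -/
theorem det_zetaMatrix : (zetaMatrix α).det = 1 := by
  let e : LinearExtension α ≃ α := Equiv.refl α
  have : Fintype (LinearExtension α) := Fintype.ofEquiv α e.symm
  rw [← det_submatrix_equiv_self e, det_of_isUpperTriangular]
  · simp [zetaMatrix, e]
  · intro i j hji
    simp only [submatrix_apply, zetaMatrix, of_apply]
    exact if_neg fun hij => ((toLinearExtension (α := α)).monotone hij).not_gt hji

theorem det_ones_sub_zetaMatrix :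
    (of (fun _ _ => 1) - zetaMatrix α).det =
      (-1) ^ Fintype.card α * chainSum (univ : Finset α) := by
  set v : α → ℤ := fun j => chainSum {z | j < z}
  have hv : zetaMatrix α *ᵥ v = 1 := by
    ext a
    simp only [mulVec, dotProduct, zetaMatrix, of_apply, ite_mul, one_mul, zero_mul,
      ← sum_filter, Pi.one_apply]
    exact sum_chainSum_filter_lt_of_le a
  have hfactor :
      of (fun _ _ => 1) - zetaMatrix α = zetaMatrix α * (vecMulVec v (1 : α → ℤ) - 1) := by
    rw [Matrix.mul_sub, mul_vecMulVec, hv, Matrix.mul_one]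
    ext a b
    simp
  have hrank1 : vecMulVec v (1 : α → ℤ) - 1 = -(1 + vecMulVec (-v) 1) := by
    rw [neg_vecMulVec, neg_add, neg_neg, sub_eq_neg_add, add_comm]
  rw [hfactor, det_mul, det_zetaMatrix, one_mul, hrank1, det_neg, vecMulVec_eq Unit,
    det_one_add_replicateCol_mul_replicateRow, dotProduct_neg, one_dotProduct,
    sum_chainSum_filter_lt]
  ring

end ZetaMatrix

theorem det_assocMatrix {n : ℕ} (po : PartialOrder (Fin n)) :
    (assocMatrix po).det = (-1) ^ n * @chainSum _ po univ := by
  have hM : assocMatrix po = of (fun _ _ => 1) - @zetaMatrix _ po := by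
    ext a b
    by_cases hab : po.le a b <;> simp [assocMatrix, zetaMatrix, hab]
  rw [hM, @det_ones_sub_zetaMatrix _ po, Fintype.card_fin]

theorem Dismantlable.chainSum_eq_zero {n : ℕ} {po : PartialOrder (Fin n)} {s : Finset (Fin n)}
    (h : Dismantlable po s) : @chainSum _ po s = 0 := by
  induction h with
  | single x => exact @chainSum_singleton _ po _ x
  | step s x hx hbeat _ ih => rwa [← @chainSum_erase_of_isBeatPoint _ po _ s x hx hbeat]

/-- Removing a weak beat point (a point whose punctured down-set or punctured
up-set is contractible, i.e. dismantlable) changes the sign of the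
determinant. -/
theorem stmt13 {n : ℕ} (po : PartialOrder (Fin (n + 1))) (i : Fin (n + 1))
    (h : Dismantlable po (Finset.univ.filter fun k => po.lt k i) ∨
         Dismantlable po (Finset.univ.filter fun k => po.lt i k)) :
    (assocMatrix po).det =
      - ((assocMatrix po).submatrix i.succAbove i.succAbove).det := by
  let po' : PartialOrder (Fin n) := PartialOrder.lift i.succAbove Fin.succAbove_right_injective
  have hthrough : @chainSum _ po {k | po.lt k i} * @chainSum _ po {k | po.lt i k} = 0 := by
    rcases h with h | h <;> simp [h.chainSum_eq_zero]
  have hpunct : @chainSum _ po' univ = @chainSum _ po (univ.erase i) := by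
    rw [← compl_singleton, ← Fin.image_succAbove_univ]
    exact (@chainSum_image _ po' _ po _ ⟨i.succAboveEmb, Iff.rfl⟩ univ).symm
  have hsub : (assocMatrix po).submatrix i.succAbove i.succAbove = assocMatrix po' := rfl
  rw [hsub, det_assocMatrix, det_assocMatrix, @chainSum_univ_eq_chainSum_erase_sub_mul _ po,
    hthrough, hpunct]
  ring
end

section
/- Let n ≥ 2 and let ≤ be the fence order on Fin n, defined by i ≤ j iff i = j, or (Even (i : ℕ) and (j : ℕ) = i + 1), or (Even (i : ℕ) and (i : ℕ) = j + 1) — i.e., the zigzag x₀ < x₁ > x₂ < x₃ > ⋯ in which even-indexed points are minimal and odd-indexed points are maximal. Then the characteristic polynomial of its associated matrix M (in Mathlib's convention det(X·1 − M) ∈ ℤ[X]) equals X · (X − (n − 2)) · (X + 1)^(n−2). -/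
/-!
Write `M = J - L - 1`, where `J` is the all-ones matrix and `L` the 0/1 matrix of the strict
order, so that the characteristic polynomial of `M` is that of `J - L` shifted by `1`. A fence
has no chains `a < b < c`, hence `L² = 0` and `(t - L) (t + L - J) = t² - ((t - L) 𝟙) 𝟙ᵀ` is a
scalar minus a rank-one matrix, whose determinant is explicit, while `det (t - L) = tⁿ` since `L`
is nilpotent. Cancelling `tⁿ` expresses the characteristic polynomial through `𝟙ᵀ 𝟙 = n` and
`𝟙ᵀ L 𝟙`, the number of comparable pairs, which is `n - 1` for a fence.
-/

open scoped Classical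

open Finset Polynomial Matrix

section CharpolyRankOneSubSquareZero

variable {ι S R : Type*} [Fintype ι] [DecidableEq ι]

theorem det_scalar_sub_mul_det_scalar_add_sub_vecMulVec [CommRing S] {N : Matrix ι ι S}
    (hN : N * N = 0) (t : S) (u v : ι → S) :
    (scalar ι t - N).det * (scalar ι t + N - vecMulVec u v).det =
      (t ^ 2) ^ Fintype.card ι -
        (t * (u ⬝ᵥ v) - N *ᵥ u ⬝ᵥ v) * (t ^ 2) ^ (Fintype.card ι - 1) := by
  have hcomm : N * scalar ι t = scalar ι t * N :=
    (scalar_commute t (fun _ => Commute.all _ _) N).symm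
  have hprod : (scalar ι t - N) * (scalar ι t + N - vecMulVec u v) =
      scalar ι (t ^ 2) - vecMulVec ((scalar ι t - N) *ᵥ u) v := by
    rw [Matrix.mul_sub, mul_vecMulVec, Matrix.mul_add, Matrix.sub_mul, Matrix.sub_mul, hN, hcomm,
      map_pow, sq]
    abel
  rw [← det_mul, hprod, ← eval_charpoly, charpoly_vecMulVec, sub_mulVec, sub_dotProduct,
    scalar_apply, ← smul_one_eq_diagonal, smul_mulVec, one_mulVec, smul_dotProduct, smul_eq_mul]
  simp

theorem charpoly_eq_X_pow_of_mul_self_eq_zero [CommRing R] [IsReduced R] {N : Matrix ι ι R}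
    (hN : N * N = 0) : N.charpoly = X ^ Fintype.card ι := by
  have h := isNilpotent_charpoly_sub_pow_of_isNilpotent (M := N) ⟨2, by rw [sq, hN]⟩
  exact sub_eq_zero.mp <| Polynomial.ext fun i => (Polynomial.isNilpotent_iff.mp h i).eq_zero

theorem charpoly_vecMulVec_sub_of_mul_self_eq_zero [CommRing R] [IsReduced R]
    {N : Matrix ι ι R} (hN : N * N = 0) (u v : ι → R) (hι : 2 ≤ Fintype.card ι) :
    (vecMulVec u v - N).charpoly =
      X ^ (Fintype.card ι - 2) * (X ^ 2 - C (u ⬝ᵥ v) * X + C (N *ᵥ u ⬝ᵥ v)) := by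
  set N' := C.mapMatrix N
  have hN' : N' * N' = 0 := by rw [← map_mul, hN, map_zero]
  have hchar :
      (vecMulVec u v - N).charmatrix = scalar ι X + N' - vecMulVec (C ∘ u) (C ∘ v) := by
    ext i j : 1
    simp only [charmatrix, N', RingHom.mapMatrix_apply, scalar_apply, Matrix.sub_apply,
      Matrix.add_apply, map_apply, vecMulVec_apply, map_sub, map_mul, Function.comp_apply]
    ring
  have key : X ^ Fintype.card ι * (vecMulVec u v - N).charpoly = (X ^ 2) ^ Fintype.card ι -
      (X * C (u ⬝ᵥ v) - C (N *ᵥ u ⬝ᵥ v)) * (X ^ 2) ^ (Fintype.card ι - 1) := by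
    have hmulVec : N' *ᵥ (C ∘ u) = C ∘ (N *ᵥ u) :=
      funext fun i => (RingHom.map_mulVec C N u i).symm
    rw [← charpoly_eq_X_pow_of_mul_self_eq_zero hN, charpoly, charpoly, hchar,
      RingHom.map_dotProduct, RingHom.map_dotProduct, ← hmulVec]
    exact det_scalar_sub_mul_det_scalar_add_sub_vecMulVec hN' X (C ∘ u) (C ∘ v)
  obtain ⟨k, hk⟩ : ∃ k, Fintype.card ι = k + 2 := ⟨_, (Nat.sub_add_cancel hι).symm⟩
  rw [hk] at key ⊢
  refine (isRegular_X_pow (R := R) (k + 2)).left ?_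
  simp only [key, Nat.add_sub_cancel, show k + 2 - 1 = k + 1 by omega]
  ring

end CharpolyRankOneSubSquareZero

namespace PartialOrder

variable {n : ℕ} (po : PartialOrder (Fin n))

noncomputable def ltMatrix : Matrix (Fin n) (Fin n) ℤ :=
  of fun i j => if po.lt i j then 1 else 0

theorem assocMatrix_eq_vecMulVec_sub_ltMatrix_sub_one :
    assocMatrix po = vecMulVec 1 1 - po.ltMatrix - 1 := by
  ext i j
  rcases eq_or_ne i j with rfl | hij
  · simp [assocMatrix, ltMatrix]
  · have hlt : po.lt i j ↔ po.le i j := (po.lt_iff_le_not_ge i j).trans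
      ⟨And.left, fun h => ⟨h, fun h' => hij (po.le_antisymm i j h h')⟩⟩
    by_cases h : po.le i j <;> simp [assocMatrix, ltMatrix, hij, hlt, h]

theorem ltMatrix_mul_self (h : ∀ a b c, po.lt a b → ¬ po.lt b c) :
    po.ltMatrix * po.ltMatrix = 0 := by
  ext i j
  rw [mul_apply, Matrix.zero_apply]
  refine Finset.sum_eq_zero fun k _ => ?_
  by_cases hik : po.lt i k
  · simp [ltMatrix, h i k j hik]
  · simp [ltMatrix, hik]

theorem ltMatrix_mulVec_one_dotProduct_one :
    po.ltMatrix *ᵥ 1 ⬝ᵥ 1 = #{p : Fin n × Fin n | po.lt p.1 p.2} := by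
  rw [natCast_card_filter, Fintype.sum_prod_type]
  simp [ltMatrix, dotProduct, mulVec]

theorem charpoly_assocMatrix_of_height_le_one (h : ∀ a b c, po.lt a b → ¬ po.lt b c)
    (hn : 2 ≤ n) :
    (assocMatrix po).charpoly = (X + 1) ^ (n - 2) *
      ((X + 1) ^ 2 - C (n : ℤ) * (X + 1) + C (#{p : Fin n × Fin n | po.lt p.1 p.2} : ℤ)) := by
  rw [assocMatrix_eq_vecMulVec_sub_ltMatrix_sub_one, ← map_one (scalar (Fin n)),
    charpoly_sub_scalar, charpoly_vecMulVec_sub_of_mul_self_eq_zero (po.ltMatrix_mul_self h)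
      1 1 (by simpa using hn), ltMatrix_mulVec_one_dotProduct_one, one_dotProduct_one]
  simp

end PartialOrder

def IsFence {n : ℕ} (po : PartialOrder (Fin n)) : Prop :=
  ∀ i j : Fin n, po.le i j ↔
    i = j ∨ (Even (i : ℕ) ∧ (j : ℕ) = (i : ℕ) + 1) ∨
      (Even (i : ℕ) ∧ (i : ℕ) = (j : ℕ) + 1)

namespace IsFence

variable {n : ℕ} {po : PartialOrder (Fin n)}

theorem lt_iff (h : IsFence po) {i j : Fin n} :
    po.lt i j ↔ Even (i : ℕ) ∧ ((j : ℕ) = i + 1 ∨ (i : ℕ) = j + 1) := by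
  rw [po.lt_iff_le_not_ge, h, h]
  simp only [Fin.ext_iff, Nat.even_iff]
  omega

theorem not_lt_of_lt (h : IsFence po) {a b c : Fin n} (hab : po.lt a b) : ¬ po.lt b c := by
  rw [h.lt_iff, Nat.even_iff] at hab ⊢
  omega

theorem card_lt (h : IsFence po) : #{p : Fin n × Fin n | po.lt p.1 p.2} = n - 1 := by
  -- the `k`-th comparable pair is `{k, k + 1}`, oriented upwards from its even member
  refine ((card_bij (s := (univ : Finset (Fin (n - 1))))
    (fun k _ => if Even (k : ℕ) then ((⟨k, by omega⟩ : Fin n), ⟨k + 1, by omega⟩)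
      else (⟨k + 1, by omega⟩, ⟨k, by omega⟩)) ?_ ?_ ?_).symm.trans ?_)
  · intro k _
    simp only [mem_filter, mem_univ, true_and]
    split_ifs with hk <;> simp [h.lt_iff, hk, Nat.even_add_one]
  · intro k _ l _ hkl
    split_ifs at hkl with hk hl hl <;>
      simp only [Prod.ext_iff, Fin.ext_iff, Nat.even_iff] at hkl hk hl ⊢ <;> omega
  · rintro ⟨i, j⟩ hij
    simp only [mem_filter, mem_univ, true_and, h.lt_iff] at hij
    refine ⟨⟨min i j, by omega⟩, mem_univ _, ?_⟩
    split_ifs with hk <;>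
      simp only [Prod.ext_iff, Fin.ext_iff, Nat.even_iff] at hij hk ⊢ <;> omega
  · simp

end IsFence

/-- The characteristic polynomial of the matrix of a fence with `n ≥ 2` points
is `X (X - (n - 2)) (X + 1) ^ (n - 2)`. -/
theorem stmt15 {n : ℕ} (hn : 2 ≤ n) (po : PartialOrder (Fin n))
    (hle : ∀ i j : Fin n, po.le i j ↔
      i = j ∨ (Even (i : ℕ) ∧ (j : ℕ) = (i : ℕ) + 1) ∨
        (Even (i : ℕ) ∧ (i : ℕ) = (j : ℕ) + 1)) :
    (assocMatrix po).charpoly =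
      Polynomial.X * (Polynomial.X - Polynomial.C ((n : ℤ) - 2)) *
        (Polynomial.X + 1) ^ (n - 2) := by
  have hfence : IsFence po := hle
  rw [po.charpoly_assocMatrix_of_height_le_one (fun _ _ _ => hfence.not_lt_of_lt) hn,
    hfence.card_lt, Nat.cast_sub (by omega : 1 ≤ n)]
  simp only [map_sub, map_natCast, map_ofNat]
  ring
end

section
/- If the poset (Fin n, ≤) has a greatest element m (or, dually, a least element m), then the characteristic polynomial of M (in Mathlib's convention det(X·1 − M) ∈ ℤ[X]) equals X · charpoly(M∖m), where M∖m is the matrix obtained from M by deleting row m and column m. -/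
open scoped Classical

/-!
Expanding `det (X • 1 - M)` along the column of a greatest element `m` (every entry `M k m`
vanishes, since `k ≤ m`) leaves only the diagonal term `X * det (X • 1 - M∖m)`; for a least
element the same happens with the row of `m`, i.e. for the transpose.
-/

open Polynomial

namespace Matrix

variable {R : Type*} [CommRing R]

theorem charmatrix_submatrix {l n : Type*} [Fintype l] [Fintype n] [DecidableEq l]
    [DecidableEq n] (M : Matrix n n R) {e : l → n} (he : Function.Injective e) :
    (M.submatrix e e).charmatrix = M.charmatrix.submatrix e e := by
  ext i j
  by_cases hij : i = j
  · subst hij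
    simp
  · simp [charmatrix_apply_ne _ _ _ hij, charmatrix_apply_ne _ _ _ (he.ne hij)]

theorem charpoly_eq_X_sub_C_mul_of_col_eq_zero {n : ℕ}
    (A : Matrix (Fin (n + 1)) (Fin (n + 1)) R) (m : Fin (n + 1)) (h : ∀ i ≠ m, A i m = 0) :
    A.charpoly = (X - C (A m m)) * (A.submatrix m.succAbove m.succAbove).charpoly := by
  rw [charpoly, det_succ_column _ m, Finset.sum_eq_single m]
  · rw [charmatrix_apply_eq, Even.neg_one_pow ⟨m, rfl⟩, one_mul, charpoly,
      charmatrix_submatrix _ Fin.succAbove_right_injective]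
  · intro i _ hi
    rw [charmatrix_apply_ne _ _ _ hi, h i hi, map_zero, neg_zero, mul_zero, zero_mul]
  · exact fun hm => absurd (Finset.mem_univ m) hm

theorem charpoly_eq_X_sub_C_mul_of_row_eq_zero {n : ℕ}
    (A : Matrix (Fin (n + 1)) (Fin (n + 1)) R) (m : Fin (n + 1)) (h : ∀ j ≠ m, A m j = 0) :
    A.charpoly = (X - C (A m m)) * (A.submatrix m.succAbove m.succAbove).charpoly := by
  simpa [charpoly_transpose, ← transpose_submatrix] using
    charpoly_eq_X_sub_C_mul_of_col_eq_zero Aᵀ m h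

end Matrix

theorem assocMatrix_eq_zero_of_le {n : ℕ} (po : PartialOrder (Fin n)) {i j : Fin n}
    (hij : po.le i j) : assocMatrix po i j = 0 := by
  simp [assocMatrix, hij]

/-- If the poset has a greatest element `m` (or, dually, a least element `m`),
then the characteristic polynomial of `M` is `X` times the characteristic
polynomial of the matrix with the row and column of `m` deleted. -/
theorem stmt16 {n : ℕ} (po : PartialOrder (Fin (n + 1))) (m : Fin (n + 1))
    (h : (∀ k, po.le k m) ∨ (∀ k, po.le m k)) :
    (assocMatrix po).charpoly =
      Polynomial.X *
        ((assocMatrix po).submatrix m.succAbove m.succAbove).charpoly := by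
  have hdiag : assocMatrix po m m = 0 := assocMatrix_eq_zero_of_le po (po.le_refl m)
  rcases h with hgreatest | hleast
  · rw [Matrix.charpoly_eq_X_sub_C_mul_of_col_eq_zero _ m
      fun k _ => assocMatrix_eq_zero_of_le po (hgreatest k), hdiag, map_zero, sub_zero]
  · rw [Matrix.charpoly_eq_X_sub_C_mul_of_row_eq_zero _ m
      fun k _ => assocMatrix_eq_zero_of_le po (hleast k), hdiag, map_zero, sub_zero]
end

section
/- The determinant of M + 1 (the associated matrix plus the n×n identity matrix, over ℤ) equals 1 if the partial order ≤ on Fin n is a total order, and equals 0 if ≤ is not a total order. -/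
open scoped Classical

/-!
Adding the identity turns the `0` on the diagonal into a `1`, so row `i` of `M + 1` is the
indicator of the complement of the strict up-set `Ioi i`. For a total order this matrix is
lower triangular with unit diagonal. Otherwise, choosing an incomparable pair `(a, b)` maximal
in the product order forces every `x > a` to be comparable with `b` (and vice versa), so
`Ioi a = Ioi b` and rows `a` and `b` coincide.
-/

section Incomparable

variable {α : Type*} [PartialOrder α]

theorem lt_of_lt_of_not_le_of_comparable {a b x : α} (hab : ¬ a ≤ b) (hax : a < x)
    (hxb : x ≤ b ∨ b ≤ x) : b < x := by
  rcases hxb with hxb | hbx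
  · exact absurd (hax.le.trans hxb) hab
  · exact hbx.lt_of_ne fun hbx => hab (hbx ▸ hax.le)

theorem exists_ne_Ioi_eq_of_not_total [Finite α] (h : ¬ ∀ a b : α, a ≤ b ∨ b ≤ a) :
    ∃ a b : α, a ≠ b ∧ Set.Ioi a = Set.Ioi b := by
  set S : Set (α × α) := {p | ¬ p.1 ≤ p.2 ∧ ¬ p.2 ≤ p.1}
  have hS : S.Nonempty := by
    push Not at h
    obtain ⟨a, b, hab, hba⟩ := h
    exact ⟨(a, b), hab, hba⟩
  obtain ⟨⟨a, b⟩, hmax⟩ := S.toFinite.exists_maximal hS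
  obtain ⟨hab, hba⟩ := hmax.prop
  have comparable_of_lt {p : α × α} (hp : (a, b) < p) : p.1 ≤ p.2 ∨ p.2 ≤ p.1 := by
    by_contra hp'
    exact hmax.not_gt (not_or.1 hp') hp
  refine ⟨a, b, fun h => hab h.le, Set.ext fun x => ⟨fun hax => ?_, fun hbx => ?_⟩⟩
  · exact lt_of_lt_of_not_le_of_comparable hab hax
      (comparable_of_lt (Prod.mk_lt_mk_of_lt_of_le hax le_rfl))
  · exact lt_of_lt_of_not_le_of_comparable hba hbx
      (comparable_of_lt (Prod.mk_lt_mk_of_le_of_lt le_rfl hbx)).symm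

end Incomparable

theorem Matrix.det_of_total_of_lt_imp_eq_zero {m R : Type*} [Fintype m] [DecidableEq m]
    [PartialOrder m] [CommRing R] (htotal : ∀ a b : m, a ≤ b ∨ b ≤ a) (A : Matrix m m R)
    (hA : ∀ i j, i < j → A i j = 0) : A.det = ∏ i, A i i := by
  let _ : LinearOrder m :=
    { ‹PartialOrder m› with le_total := htotal, toDecidableLE := Classical.decRel _ }
  exact A.det_of_isLowerTriangular hA

theorem assocMatrix_add_one_apply {n : ℕ} (po : PartialOrder (Fin n)) (i j : Fin n) :
    (assocMatrix po + 1) i j = if po.lt i j then 0 else 1 := by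
  let _ := po
  rcases eq_or_ne i j with rfl | hij
  · simp [assocMatrix]
  · simp [assocMatrix, hij, lt_iff_le_and_ne]

/-- `det (M + I)` is `1` if the order is total and `0` otherwise. -/
theorem stmt17 {n : ℕ} (po : PartialOrder (Fin n)) :
    ((∀ i j : Fin n, po.le i j ∨ po.le j i) → (assocMatrix po + 1).det = 1) ∧
      (¬ (∀ i j : Fin n, po.le i j ∨ po.le j i) →
        (assocMatrix po + 1).det = 0) := by
  -- `Fin n` has its own order instance; `po` must be made the local one (and `<` avoided
  -- in this proof, which would still elaborate to the standard `<` on `Fin n`).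
  let _ := po
  refine ⟨fun htotal => ?_, fun hnot => ?_⟩
  · rw [Matrix.det_of_total_of_lt_imp_eq_zero htotal _ fun i j hij => by
      rw [assocMatrix_add_one_apply, if_pos hij]]
    exact Finset.prod_eq_one fun i _ => by rw [assocMatrix_add_one_apply, if_neg (lt_irrefl i)]
  · obtain ⟨a, b, hab, hIoi⟩ := exists_ne_Ioi_eq_of_not_total hnot
    refine Matrix.det_zero_of_row_eq hab (funext fun j => ?_)
    have hj : po.lt a j ↔ po.lt b j := Set.ext_iff.1 hIoi j
    simp only [assocMatrix_add_one_apply]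
    exact if_congr hj rfl rfl
end

section
/- Let σ : Fin n → Fin n be an order automorphism of (Fin n, ≤) (a bijection with i ≤ j ↔ σ i ≤ σ j) satisfying σ ∘ σ = id and σ i ≠ i for all i (a free ℤ₂-action). Then n = 2m for some m, and for every f : Fin m → Fin n such that the map Fin m ⊕ Fin m → Fin n sending inl i to f i and inr i to σ (f i) is a bijection, the matrices A, B : Matrix (Fin m) (Fin m) ℤ defined by A i j = M (f i) (f j) and B i j = M (f i) (σ (f j)) satisfy det M = det (A + B) · det (A − B). -/
open scoped Classical

/-! The involution `σ` preserves `M`, so listing the points as `f i` followed by `σ (f i)`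
turns `M` into the block matrix `[[A, B], [B, A]]`, and a permutation of rows and columns
does not change the determinant. Subtracting the first block row from the second and adding
the second block column to the first makes it block triangular with diagonal `A + B`, `A - B`.
Evenness of `n` holds because a fixed-point-free involution is a product of disjoint
transpositions covering everything. -/

open Function Matrix

theorem Function.Involutive.even_card_of_forall_ne {α : Type*} [Fintype α] {σ : α → α}
    (hσ : Involutive σ) (hfree : ∀ a, σ a ≠ a) : Even (Fintype.card α) := by
  have hsupport : hσ.toPerm.support = Finset.univ := by
    ext a
    simpa using hfree a
  rw [← Finset.card_univ, ← hsupport, even_iff_two_dvd]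
  exact Equiv.Perm.two_dvd_card_support (Equiv.ext hσ)

namespace Matrix

variable {ι κ R : Type*}

theorem det_fromBlocks_self_swap [Fintype κ] [DecidableEq κ] [CommRing R]
    (A B : Matrix κ κ R) : (fromBlocks A B B A).det = (A + B).det * (A - B).det := by
  have htriangular : fromBlocks 1 0 (-1) 1 * fromBlocks A B B A * fromBlocks 1 0 1 1 =
      fromBlocks (A + B) B 0 (A - B) := by
    simp only [fromBlocks_multiply, fromBlocks_inj]
    refine ⟨?_, ?_, ?_, ?_⟩ <;> noncomm_ring
  have := congrArg det htriangular
  simpa only [det_mul, det_fromBlocks_zero₁₂, det_fromBlocks_zero₂₁, det_one, one_mul,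
    mul_one] using this

theorem submatrix_sumElim_eq_fromBlocks_of_involutive (M : Matrix ι ι R) {σ : ι → ι}
    (hσ : Involutive σ) (hM : ∀ a b, M (σ a) (σ b) = M a b) (f : κ → ι) :
    M.submatrix (Sum.elim f (σ ∘ f)) (Sum.elim f (σ ∘ f)) =
      fromBlocks (M.submatrix f f) (M.submatrix f (σ ∘ f))
        (M.submatrix f (σ ∘ f)) (M.submatrix f f) := by
  ext (i | i) (j | j)
  · rfl
  · rfl
  · simpa [hσ (f j)] using hM (f i) (σ (f j))
  · exact hM _ _

theorem det_eq_det_add_mul_det_sub_of_involutive [Fintype ι] [DecidableEq ι] [Fintype κ]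
    [DecidableEq κ] [CommRing R] (M : Matrix ι ι R) {σ : ι → ι}
    (hσ : Involutive σ) (hM : ∀ a b, M (σ a) (σ b) = M a b) {f : κ → ι}
    (hf : Bijective (Sum.elim f (σ ∘ f))) :
    M.det = (M.submatrix f f + M.submatrix f (σ ∘ f)).det *
      (M.submatrix f f - M.submatrix f (σ ∘ f)).det := by
  rw [← det_fromBlocks_self_swap, ← submatrix_sumElim_eq_fromBlocks_of_involutive M hσ hM,
    ← det_submatrix_equiv_self (Equiv.ofBijective _ hf)]
  rfl

end Matrix

theorem assocMatrix_apply_map {n : ℕ} (po : PartialOrder (Fin n)) {σ : Fin n → Fin n}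
    (hσ : ∀ i j, po.le i j ↔ po.le (σ i) (σ j)) (a b : Fin n) :
    assocMatrix po (σ a) (σ b) = assocMatrix po a b := by
  simp only [assocMatrix, of_apply, ← hσ]

theorem stmt19_general {n : ℕ} (po : PartialOrder (Fin n)) (σ : Fin n → Fin n)
    (hord : ∀ i j : Fin n, po.le i j ↔ po.le (σ i) (σ j))
    (hinv : σ ∘ σ = id) (hfree : ∀ i, σ i ≠ i) :
    (∃ m, n = 2 * m) ∧
      ∀ (m : ℕ) (f : Fin m → Fin n),
        Function.Bijective
          (Sum.elim f (fun i => σ (f i)) : Fin m ⊕ Fin m → Fin n) →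
        (assocMatrix po).det =
          (Matrix.of fun i j : Fin m =>
              assocMatrix po (f i) (f j) + assocMatrix po (f i) (σ (f j))).det *
            (Matrix.of fun i j : Fin m =>
              assocMatrix po (f i) (f j) - assocMatrix po (f i) (σ (f j))).det := by
  have hσ : Involutive σ := congrFun hinv
  refine ⟨?_, fun m f hf => ?_⟩
  · obtain ⟨m, hm⟩ := hσ.even_card_of_forall_ne hfree
    exact ⟨m, by simpa [two_mul] using hm⟩
  · exact det_eq_det_add_mul_det_sub_of_involutive _ hσ (assocMatrix_apply_map po hord) hf

/-- For a free `ℤ₂`-action by order automorphisms, the matrix is a 2×2 block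
matrix with blocks `A`, `B` (in any labelling adapted to the action) and
`det M = det (A + B) * det (A - B)`. -/
theorem stmt19 {n : ℕ} (po : PartialOrder (Fin n)) (σ : Fin n → Fin n)
    (hbij : Function.Bijective σ)
    (hord : ∀ i j : Fin n, po.le i j ↔ po.le (σ i) (σ j))
    (hinv : σ ∘ σ = id) (hfree : ∀ i, σ i ≠ i) :
    (∃ m, n = 2 * m) ∧
      ∀ (m : ℕ) (f : Fin m → Fin n),
        Function.Bijective
          (Sum.elim f (fun i => σ (f i)) : Fin m ⊕ Fin m → Fin n) →
        (assocMatrix po).det =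
          (Matrix.of fun i j : Fin m =>
              assocMatrix po (f i) (f j) + assocMatrix po (f i) (σ (f j))).det *
            (Matrix.of fun i j : Fin m =>
              assocMatrix po (f i) (f j) - assocMatrix po (f i) (σ (f j))).det :=
  stmt19_general po σ hord hinv hfree
end
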